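/- Let z_0, ..., z_n be real numbers with sum equal to zero, and assume not all z_s are zero. Then there exists a constant K > 0 such that for all real ξ, K·ξ² ≤ -∑_{s=0}^n z_s · ξ · exp(-z_s·ξ). -/
import Mathlib

lemma g_nonneg (x : ℝ) : 0 ≤ x * (1 - Real.exp (-x)) := by
  rcases le_or_gt 0 x with h | h
  · have : Real.exp (-x) ≤ 1 := Real.exp_le_one_iff.mpr (by linarith)
    exact mul_nonneg h (by linarith)
  · have : 1 ≤ Real.exp (-x) := Real.one_le_exp_iff.mpr (by linarith)
    nlinarith

lemma g_ge_sq {x : ℝ} (hx : x ≤ 0) : x ^ 2 ≤ x * (1 - Real.exp (-x)) := by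
  have h : -x + 1 ≤ Real.exp (-x) := Real.add_one_le_exp (-x)
  have h2 : 1 - Real.exp (-x) ≤ x := by linarith
  nlinarith

theorem boltzmann_strong_monotonicity (n : ℕ) (z : Fin (n + 1) → ℝ)
    (hsum : ∑ s, z s = 0) (hne : ∃ s, z s ≠ 0) :
    ∃ K > 0, ∀ ξ : ℝ,
      K * ξ ^ 2 ≤ -∑ s, z s * ξ * Real.exp (-(z s * ξ)) := by
  -- get a negative and a positive entry
  obtain ⟨s₀, hs₀⟩ := hne
  have hneg : ∃ s, z s < 0 := by
    by_contra h
    push_neg at h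
    have := (Finset.sum_eq_zero_iff_of_nonneg (fun s _ => h s)).mp hsum
    exact hs₀ (this s₀ (Finset.mem_univ _))
  have hpos : ∃ s, 0 < z s := by
    by_contra h
    push_neg at h
    have hsum' : ∑ s, (-z s) = 0 := by
      rw [Finset.sum_neg_distrib, hsum, neg_zero]
    have := (Finset.sum_eq_zero_iff_of_nonneg
      (fun s _ => neg_nonneg.mpr (h s))).mp hsum'
    exact hs₀ (by linarith [this s₀ (Finset.mem_univ _)])
  obtain ⟨a, ha⟩ := hneg
  obtain ⟨b, hb⟩ := hpos
  refine ⟨min ((z a) ^ 2) ((z b) ^ 2), lt_min (by nlinarith) (by nlinarith), fun ξ => ?_⟩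
  have key : -∑ s, z s * ξ * Real.exp (-(z s * ξ))
      = ∑ s, z s * ξ * (1 - Real.exp (-(z s * ξ))) := by
    have h1 : ∑ s, z s * ξ = 0 := by rw [← Finset.sum_mul, hsum, zero_mul]
    simp only [mul_sub, mul_one]
    rw [Finset.sum_sub_distrib, h1, zero_sub]
  rw [key]
  have hterm : ∀ s : Fin (n+1), (0:ℝ) ≤ z s * ξ * (1 - Real.exp (-(z s * ξ))) :=
    fun s => g_nonneg _
  rcases le_or_gt 0 ξ with hξ | hξ
  · have hza : z a * ξ ≤ 0 := mul_nonpos_of_nonpos_of_nonneg ha.le hξ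
    have h1 : (z a * ξ) ^ 2 ≤ z a * ξ * (1 - Real.exp (-(z a * ξ))) := g_ge_sq hza
    have h2 : z a * ξ * (1 - Real.exp (-(z a * ξ)))
        ≤ ∑ s, z s * ξ * (1 - Real.exp (-(z s * ξ))) :=
      Finset.single_le_sum (fun s _ => hterm s) (Finset.mem_univ a)
    have h3 : min ((z a) ^ 2) ((z b) ^ 2) * ξ ^ 2 ≤ (z a * ξ) ^ 2 := by
      rw [mul_pow]
      exact mul_le_mul_of_nonneg_right (min_le_left _ _) (sq_nonneg ξ)
    linarith
  · have hzb : z b * ξ ≤ 0 := mul_nonpos_of_nonneg_of_nonpos hb.le hξ.le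
    have h1 : (z b * ξ) ^ 2 ≤ z b * ξ * (1 - Real.exp (-(z b * ξ))) := g_ge_sq hzb
    have h2 : z b * ξ * (1 - Real.exp (-(z b * ξ)))
        ≤ ∑ s, z s * ξ * (1 - Real.exp (-(z s * ξ))) :=
      Finset.single_le_sum (fun s _ => hterm s) (Finset.mem_univ b)
    have h3 : min ((z a) ^ 2) ((z b) ^ 2) * ξ ^ 2 ≤ (z b * ξ) ^ 2 := by
      rw [mul_pow]
      exact mul_le_mul_of_nonneg_right (min_le_right _ _) (sq_nonneg ξ)
    linarith
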